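/- Let x ∈ gl(n,ℂ), i < n, and j ≥ 1. The curve θ(t) = Ad(exp(-t·j·(x_i)^{j-1}))·x satisfies the ODE θ'(t) = [θ(t), j·(θ(t)_i)^{j-1}], i.e., it is an integral curve of the Hamiltonian vector field of f_{i,j}(x) = trace((x_i)^j) with respect to the Lie-Poisson structure, and this flow is defined for all complex time t. -/

import Mathlib

open Matrix

attribute [local instance] Matrix.normedAddCommGroup Matrix.normedSpace

/-- The top-left `i×i` cutoff of `x`, viewed as an `n×n` matrix. -/
def cutoff (n : ℕ) (x : Matrix (Fin n) (Fin n) ℂ) (i : ℕ) : Matrix (Fin n) (Fin n) ℂ :=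
  Matrix.of fun a b => if (a : ℕ) < i ∧ (b : ℕ) < i then x a b else 0

/-- `(x_i)^k`, computed in `gl(i)` and embedded back into `gl(n)`. -/
def blkpow (n : ℕ) (x : Matrix (Fin n) (Fin n) ℂ) (i k : ℕ) : Matrix (Fin n) (Fin n) ℂ :=
  cutoff n ((cutoff n x i) ^ k) i

/-!
Let `A = j • (x_i)^{j-1}` and `π = cutoff n 1 i`, so that `cutoff n m i = π m π`. Since `A`
commutes with `π`, so does `exp (-tA)`, hence conjugation by `exp (-tA)` commutes with taking the
cutoff and its powers; since `exp (-tA)` also commutes with `(x_i)^{j-1}`, the matrix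
`(θ(t)_i)^{j-1}` does not depend on `t`. Along `θ` the Hamiltonian vector field is thus
`θ ↦ [θ, A]` with `A` fixed, and `θ(t) = exp (-tA) x exp (tA)` solves this linear ODE.
-/

open NormedSpace

theorem hasDerivAt_exp_neg_smul_mul_mul_exp_smul {𝕂 𝔸 : Type*} [RCLike 𝕂] [NormedRing 𝔸]
    [NormedAlgebra 𝕂 𝔸] [CompleteSpace 𝔸] (A x : 𝔸) (t : 𝕂) :
    HasDerivAt (fun s : 𝕂 => exp (-(s • A)) * x * exp (s • A))
      (exp (-(t • A)) * x * exp (t • A) * A - A * (exp (-(t • A)) * x * exp (t • A))) t := by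
  have hexp_neg : HasDerivAt (fun s : 𝕂 => exp (-(s • A))) (-A * exp (-(t • A))) t := by
    simpa only [smul_neg] using hasDerivAt_exp_smul_const' (-A) t
  refine ((hexp_neg.mul_const x).mul (hasDerivAt_exp_smul_const A t)).congr_deriv ?_
  noncomm_ring

-- `HasDerivAt` only sees the topology of the matrices, so any submultiplicative norm will do.
theorem Matrix.hasDerivAt_exp_neg_smul_mul_mul_exp_smul {m 𝕂 : Type*} [Fintype m]
    [DecidableEq m] [RCLike 𝕂] (A x : Matrix m m 𝕂) (t : 𝕂) :
    HasDerivAt (fun s : 𝕂 => exp (-(s • A)) * x * exp (s • A))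
      (exp (-(t • A)) * x * exp (t • A) * A - A * (exp (-(t • A)) * x * exp (t • A))) t := by
  open scoped Matrix.Norms.Operator in
  exact _root_.hasDerivAt_exp_neg_smul_mul_mul_exp_smul A x t

theorem Matrix.exp_neg_mul_mul_exp_eq_self_of_commute {m 𝕂 : Type*} [Fintype m]
    [DecidableEq m] [RCLike 𝕂] {x B : Matrix m m 𝕂} (h : Commute x B) :
    exp (-B) * x * exp B = x := by
  open scoped Matrix.Norms.Operator in
  exact SemiconjBy.exp_neg_mul_mul_exp_eq_self h

theorem cutoff_one (n i : ℕ) :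
    cutoff n 1 i = diagonal fun a : Fin n => if (a : ℕ) < i then (1 : ℂ) else 0 := by
  ext a b
  by_cases h : a = b <;> simp [cutoff, one_apply, h]

theorem cutoff_eq_mul_mul (n : ℕ) (x : Matrix (Fin n) (Fin n) ℂ) (i : ℕ) :
    cutoff n x i = cutoff n 1 i * x * cutoff n 1 i := by
  rw [cutoff_one]
  ext a b
  by_cases ha : (a : ℕ) < i <;> by_cases hb : (b : ℕ) < i <;> simp [cutoff, ha, hb]

theorem commute_cutoff_one_cutoff (n : ℕ) (x : Matrix (Fin n) (Fin n) ℂ) (i : ℕ) :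
    Commute (cutoff n 1 i) (cutoff n x i) := by
  have hidem : cutoff n 1 i * cutoff n 1 i = cutoff n 1 i := by
    simp [cutoff_one, diagonal_mul_diagonal]
  simp only [Commute, SemiconjBy, cutoff_eq_mul_mul n x i, ← mul_assoc, hidem]
  simp only [mul_assoc, hidem]

theorem cutoff_units_conj (n : ℕ) (u : (Matrix (Fin n) (Fin n) ℂ)ˣ) (i : ℕ)
    (hu : Commute (cutoff n 1 i) u) (x : Matrix (Fin n) (Fin n) ℂ) :
    cutoff n (u * x * u⁻¹ : Matrix (Fin n) (Fin n) ℂ) i =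
      (u * cutoff n x i * u⁻¹ : Matrix (Fin n) (Fin n) ℂ) := by
  rw [cutoff_eq_mul_mul, cutoff_eq_mul_mul n x]
  simp only [mul_assoc, hu.units_inv_right.eq]
  simp only [← mul_assoc, hu.eq]

theorem blkpow_units_conj (n : ℕ) (u : (Matrix (Fin n) (Fin n) ℂ)ˣ) (i : ℕ)
    (hu : Commute (cutoff n 1 i) u) (x : Matrix (Fin n) (Fin n) ℂ) (k : ℕ) :
    blkpow n (u * x * u⁻¹ : Matrix (Fin n) (Fin n) ℂ) i k =
      (u * blkpow n x i k * u⁻¹ : Matrix (Fin n) (Fin n) ℂ) := by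
  rw [blkpow, blkpow, cutoff_units_conj n u i hu, Units.conj_pow, cutoff_units_conj n u i hu]

theorem blkpow_exp_neg_mul_mul_exp_of_commute (n : ℕ) (B : Matrix (Fin n) (Fin n) ℂ) (i : ℕ)
    (hB : Commute (cutoff n 1 i) B) (x : Matrix (Fin n) (Fin n) ℂ) (k : ℕ)
    (hxB : Commute (blkpow n x i k) B) :
    blkpow n (exp (-B) * x * exp B) i k = blkpow n x i k := by
  let u : (Matrix (Fin n) (Fin n) ℂ)ˣ :=
    { val := exp (-B)
      inv := exp B
      val_inv := by
        rw [← Matrix.exp_add_of_commute _ _ (Commute.refl B).neg_left, neg_add_cancel, exp_zero]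
      inv_val := by
        rw [← Matrix.exp_add_of_commute _ _ (Commute.refl B).neg_right, add_neg_cancel,
          exp_zero] }
  exact (blkpow_units_conj n u i hB.neg_right.exp_right x k).trans
    (Matrix.exp_neg_mul_mul_exp_eq_self_of_commute hxB)

theorem flow_is_integral_curve_general (n i j : ℕ)
    (x : Matrix (Fin n) (Fin n) ℂ) :
    ∀ t : ℂ,
      HasDerivAt
        (fun s : ℂ =>
          NormedSpace.exp (-(s • ((j : ℂ) • blkpow n x i (j - 1)))) * x *
            NormedSpace.exp (s • ((j : ℂ) • blkpow n x i (j - 1))))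
        (let θt := NormedSpace.exp (-(t • ((j : ℂ) • blkpow n x i (j - 1)))) * x *
            NormedSpace.exp (t • ((j : ℂ) • blkpow n x i (j - 1)));
          θt * ((j : ℂ) • blkpow n θt i (j - 1)) - ((j : ℂ) • blkpow n θt i (j - 1)) * θt)
        t := by
  intro t
  have hcutoff : Commute (cutoff n 1 i) (t • (j : ℂ) • blkpow n x i (j - 1)) :=
    ((commute_cutoff_one_cutoff n _ i).smul_right _).smul_right _
  have hblkpow : Commute (blkpow n x i (j - 1)) (t • (j : ℂ) • blkpow n x i (j - 1)) :=
    ((Commute.refl _).smul_right _).smul_right _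
  dsimp only
  rw [blkpow_exp_neg_mul_mul_exp_of_commute n _ i hcutoff x _ hblkpow]
  exact Matrix.hasDerivAt_exp_neg_smul_mul_mul_exp_smul _ x t

/-- The curve `θ(t) = Ad(exp(-t·j·(x_i)^{j-1}))·x` is, for every complex time `t`
(so the flow is globally defined), an integral curve of the Hamiltonian vector
field of `f_{i,j}(x) = tr((x_i)^j)`: it satisfies the ODE
`θ'(t) = [θ(t), j·(θ(t)_i)^{j-1}]`. -/
theorem flow_is_integral_curve (n i j : ℕ) (hi : i < n) (hj : 1 ≤ j)
    (x : Matrix (Fin n) (Fin n) ℂ) :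
    ∀ t : ℂ,
      HasDerivAt
        (fun s : ℂ =>
          NormedSpace.exp (-(s • ((j : ℂ) • blkpow n x i (j - 1)))) * x *
            NormedSpace.exp (s • ((j : ℂ) • blkpow n x i (j - 1))))
        (let θt := NormedSpace.exp (-(t • ((j : ℂ) • blkpow n x i (j - 1)))) * x *
            NormedSpace.exp (t • ((j : ℂ) • blkpow n x i (j - 1)));
          θt * ((j : ℂ) • blkpow n θt i (j - 1)) - ((j : ℂ) • blkpow n θt i (j - 1)) * θt)
        t :=
  flow_is_integral_curve_general n i j x
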